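/- Let k be algebraically closed with char k ≠ 2, 3. For the pair (C, L) with C = V(x₀x₁x₂) (a triangle) and L = V(x₀ + x₁ + x₂), the stabilizer of (C, L) in PGL(3, k) is exactly the group of coordinate permutations of x₀, x₁, x₂, isomorphic to the symmetric group S₃. -/

import Mathlib

/-!
Substituting `X i ↦ ∑ j, g i j • X j` turns `X 0 * X 1 * X 2` into the product of the linear
forms given by the rows of `g`. If that product is `c • X 0 * X 1 * X 2` with `c ≠ 0`, then
setting `X j = 0` shows that some row of `g` is a multiple of `X j`; as no row vanishes, distinct
columns get distinct rows, so `g` is a monomial matrix `i ↦ a i • X (σ i)`. Invariance of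
`X 0 + X 1 + X 2` up to `d` then forces every `a i` to equal `d`.
-/

open MvPolynomial

section LinearForm

variable {ι R : Type*} [Fintype ι] [CommSemiring R]

noncomputable def linearForm (a : ι → R) : MvPolynomial ι R := ∑ j, C (a j) * X j

@[simp]
theorem linearForm_zero : linearForm (0 : ι → R) = 0 := by
  simp [linearForm]

theorem coeff_single_one_linearForm [DecidableEq ι] (a : ι → R) (j : ι) :
    coeff (Finsupp.single j 1) (linearForm a) = a j := by
  simp [linearForm, coeff_sum, coeff_X, Finsupp.single_eq_single_iff]

theorem linearForm_injective : Function.Injective (linearForm : (ι → R) → MvPolynomial ι R) := by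
  classical
  intro a b h
  funext j
  simpa only [coeff_single_one_linearForm] using congrArg (coeff (Finsupp.single j 1)) h

theorem linearForm_const (d : R) : linearForm (fun _ : ι => d) = C d * ∑ j, X j := by
  simp [linearForm, Finset.mul_sum]

theorem linearForm_eq_C_mul_X {a : ι → R} {j : ι} (ha : ∀ j' ≠ j, a j' = 0) :
    linearForm a = C (a j) * X j :=
  Finset.sum_eq_single j (fun j' _ hj' => by rw [ha j' hj', C_0, zero_mul])
    (fun hj => absurd (Finset.mem_univ j) hj)

theorem aeval_update_X_zero_linearForm [DecidableEq ι] (a : ι → R) (j : ι) :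
    aeval (Function.update X j 0) (linearForm a) = linearForm (Function.update a j 0) := by
  simp only [linearForm, map_sum, map_mul, aeval_C, aeval_X, algebraMap_eq]
  refine Finset.sum_congr rfl fun m _ => ?_
  by_cases hm : m = j
  · subst hm; simp
  · simp [Function.update_of_ne hm]

end LinearForm

section MonomialMatrix

variable {ι R : Type*} [Fintype ι] [DecidableEq ι] [CommSemiring R]

theorem linearForm_smul_permMatrix_row (σ : Equiv.Perm ι) (c : R) (i : ι) :
    linearForm ((c • Matrix.of fun i j => if σ i = j then (1 : R) else 0) i) = C c * X (σ i) := by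
  rw [linearForm_eq_C_mul_X (j := σ i) fun j' hj' => by simp [Ne.symm hj']]
  simp

theorem prod_linearForm_smul_permMatrix (σ : Equiv.Perm ι) (c : R) :
    ∏ i, linearForm ((c • Matrix.of fun i j => if σ i = j then (1 : R) else 0) i)
      = C (c ^ Fintype.card ι) * ∏ j, X j := by
  simp only [linearForm_smul_permMatrix_row, Finset.prod_mul_distrib, Finset.prod_const,
    Equiv.prod_comp σ X, map_pow, Finset.card_univ]

theorem sum_linearForm_smul_permMatrix (σ : Equiv.Perm ι) (c : R) :
    ∑ i, linearForm ((c • Matrix.of fun i j => if σ i = j then (1 : R) else 0) i)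
      = C c * ∑ j, X j := by
  simp only [linearForm_smul_permMatrix_row, ← Finset.mul_sum, Equiv.sum_comp σ X]

theorem eq_smul_permMatrix_of_sum_linearForm_eq {g : Matrix ι ι R} {σ : Equiv.Perm ι} {d : R}
    (hσ : ∀ i j, j ≠ σ i → g i j = 0) (h : ∑ i, linearForm (g i) = C d * ∑ j, X j) :
    g = d • Matrix.of fun i j => if σ i = j then (1 : R) else 0 := by
  have hdiag : (fun j => g (σ.symm j) j) = fun _ => d := by
    refine linearForm_injective ?_
    rw [linearForm_const, ← h, Finset.sum_congr rfl fun i _ => linearForm_eq_C_mul_X (hσ i),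
      linearForm, ← Equiv.sum_comp σ]
    simp
  ext i j
  rcases eq_or_ne j (σ i) with rfl | hj
  · simpa using congrFun hdiag (σ i)
  · simp [hσ i j hj, Ne.symm hj]

end MonomialMatrix

section Stabilizer

variable {ι k : Type*} [Fintype ι] [CommRing k] [IsDomain k] {g : Matrix ι ι k} {c : k}

theorem row_ne_zero_of_prod_linearForm_eq (hc : c ≠ 0)
    (h : ∏ i, linearForm (g i) = C c * ∏ j, X j) (i : ι) : g i ≠ 0 := by
  have hprod : ∏ i, linearForm (g i) ≠ 0 := by
    rw [h]
    exact mul_ne_zero (C_ne_zero.mpr hc) (Finset.prod_ne_zero_iff.mpr fun j _ => X_ne_zero j)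
  intro hi
  exact Finset.prod_ne_zero_iff.mp hprod i (Finset.mem_univ i) (by rw [hi, linearForm_zero])

variable [DecidableEq ι]

theorem exists_row_eq_zero_off_of_prod_linearForm_eq
    (h : ∏ i, linearForm (g i) = C c * ∏ j, X j) (j : ι) :
    ∃ i, ∀ j' ≠ j, g i j' = 0 := by
  have hzero : ∏ i, linearForm (Function.update (g i) j 0) = 0 := by
    have := congrArg (aeval (Function.update (X : ι → MvPolynomial ι k) j 0)) h
    simp only [map_prod, aeval_update_X_zero_linearForm, map_mul, aeval_C] at this
    rw [this, Finset.prod_eq_zero (Finset.mem_univ j) (by simp), mul_zero]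
  obtain ⟨i, -, hi⟩ := Finset.prod_eq_zero_iff.mp hzero
  refine ⟨i, fun j' hj' => ?_⟩
  rw [← linearForm_zero, linearForm_injective.eq_iff] at hi
  simpa [Function.update_of_ne hj'] using congrFun hi j'

theorem exists_perm_of_prod_linearForm_eq (hc : c ≠ 0)
    (h : ∏ i, linearForm (g i) = C c * ∏ j, X j) :
    ∃ σ : Equiv.Perm ι, ∀ i j, j ≠ σ i → g i j = 0 := by
  choose f hf using exists_row_eq_zero_off_of_prod_linearForm_eq h
  have hf_inj : Function.Injective f := by
    intro j₁ j₂ hf₁₂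
    by_contra hne
    refine row_ne_zero_of_prod_linearForm_eq hc h (f j₁) (funext fun j' => ?_)
    rcases eq_or_ne j' j₁ with rfl | hj'
    · rw [hf₁₂]; exact hf j₂ j' hne
    · exact hf j₁ j' hj'
  let e := Equiv.ofBijective f hf_inj.bijective_of_finite
  refine ⟨e.symm, fun i j hj => ?_⟩
  rw [← e.apply_symm_apply i]
  exact hf _ j hj

theorem prod_sum_linearForm_eq_iff_eq_smul_permMatrix (g : Matrix ι ι k) :
    ((∃ c, c ≠ 0 ∧ ∏ i, linearForm (g i) = C c * ∏ j, X j) ∧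
      (∃ d, d ≠ 0 ∧ ∑ i, linearForm (g i) = C d * ∑ j, X j)) ↔
    ∃ (c : k) (σ : Equiv.Perm ι), c ≠ 0 ∧
      g = c • Matrix.of fun i j => if σ i = j then (1 : k) else 0 := by
  constructor
  · rintro ⟨⟨c, hc, hprod⟩, ⟨d, hd, hsum⟩⟩
    obtain ⟨σ, hσ⟩ := exists_perm_of_prod_linearForm_eq hc hprod
    exact ⟨d, σ, hd, eq_smul_permMatrix_of_sum_linearForm_eq hσ hsum⟩
  · rintro ⟨c, σ, hc, rfl⟩
    exact ⟨⟨c ^ Fintype.card ι, pow_ne_zero _ hc, prod_linearForm_smul_permMatrix σ c⟩,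
      ⟨c, hc, sum_linearForm_smul_permMatrix σ c⟩⟩

end Stabilizer

theorem stmt12 {k : Type*} [Field k]
    (g : Matrix (Fin 3) (Fin 3) k) :
    ((∃ c : k, c ≠ 0 ∧
        aeval (R := k) (fun i => ∑ j, C (g i j) * X j)
          (X 0 * X 1 * X 2 : MvPolynomial (Fin 3) k)
        = c • (X 0 * X 1 * X 2 : MvPolynomial (Fin 3) k)) ∧
     (∃ d : k, d ≠ 0 ∧
        aeval (R := k) (fun i => ∑ j, C (g i j) * X j)
          (X 0 + X 1 + X 2 : MvPolynomial (Fin 3) k)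
        = d • (X 0 + X 1 + X 2 : MvPolynomial (Fin 3) k)))
    ↔ ∃ (c : k) (σ : Equiv.Perm (Fin 3)), c ≠ 0 ∧
        g = c • Matrix.of (fun i j => if σ i = j then (1 : k) else 0) := by
  have hprod : (X 0 * X 1 * X 2 : MvPolynomial (Fin 3) k) = ∏ j, X j :=
    (Fin.prod_univ_three _).symm
  have hsum : (X 0 + X 1 + X 2 : MvPolynomial (Fin 3) k) = ∑ j, X j :=
    (Fin.sum_univ_three _).symm
  rw [hprod, hsum]
  simp only [map_prod, map_sum, aeval_X, smul_eq_C_mul]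
  exact prod_sum_linearForm_eq_iff_eq_smul_permMatrix g
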